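/- arXiv:1812.04539 — 5 statements merged into one kernel-verified Lean document; each statement's English description precedes it below -/
import Mathlib

section
/- For positive integers n and k with n + k odd, s(n,k) = (1/2) · Σ_{i=k+1}^{n} s(n,i) · C(i-1, i-k) · n^(i-k) · (-1)^(n-i), where s denotes the unsigned Stirling number of the first kind and C binomial coefficients. -/
set_option maxRecDepth 8000


open Polynomial Finset

/-- Unsigned Stirling number of the first kind: coefficient of `x^k` in
`x(x+1)⋯(x+n-1)`. -/
noncomputable def sF (n k : ℕ) : ℕ :=
  (∏ i ∈ Finset.range n, (X + C i : Polynomial ℕ)).coeff k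

/-- The `m`-th Stirling number of the first kind: coefficient of `x^k` in
`(x+m)(x+m+1)⋯(x+m+n-1)`. -/
noncomputable def sM (m n k : ℕ) : ℕ :=
  (∏ i ∈ Finset.range n, (X + C (m + i) : Polynomial ℕ)).coeff k

/-- `H n k`: the `k`-th elementary symmetric function of `1, 1/2, …, 1/n`. -/
def Hfun (n k : ℕ) : ℚ :=
  ((Finset.Icc 1 n).val.map (fun i => (1 : ℚ) / i)).esymm k

lemma sF_cast (n k : ℕ) :
    (sF n k : ℚ) = (∏ i ∈ Finset.range n, (X + C (i:ℚ))).coeff k := by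
  unfold sF
  rw [show (∏ i ∈ Finset.range n, (X + C (i:ℚ))) =
      (∏ i ∈ Finset.range n, (X + C i : Polynomial ℕ)).map (Nat.castRingHom ℚ) by
    rw [Polynomial.map_prod]; simp, Polynomial.coeff_map]
  simp

lemma degP (n : ℕ) :
    (∏ i ∈ Finset.range n, (X + C (i:ℚ))).natDegree ≤ n := by
  refine (Polynomial.natDegree_prod_le _ _).trans ?_
  simp only [natDegree_X_add_C, Finset.sum_const, smul_eq_mul, mul_one, Finset.card_range, le_refl]

lemma hPQ (n : ℕ) (hn : 1 ≤ n) :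
    (∏ i ∈ Finset.range n, (X + C (i:ℚ))) =
      X * ∏ j ∈ Finset.range (n-1), (X + C ((j:ℚ)+1)) := by
  obtain ⟨m, rfl⟩ : ∃ m, n = m + 1 := ⟨n-1, by omega⟩
  rw [Finset.prod_range_succ']
  simp [mul_comm]

lemma hComp (n : ℕ) (hn : 1 ≤ n) :
    (∏ i ∈ Finset.range n, (X + C (i:ℚ))).comp (-(X + C (n:ℚ))) =
      (-1)^n * ((X + C (n:ℚ)) * ∏ j ∈ Finset.range (n-1), (X + C ((j:ℚ)+1))) := by
  rw [Polynomial.prod_comp]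
  have h1 : ∀ i ∈ Finset.range n, (X + C (i:ℚ)).comp (-(X + C (n:ℚ)))
      = -(X + C (((n - i : ℕ)):ℚ)) := by
    intro i hi
    simp only [Finset.mem_range] at hi
    have : ((n - i : ℕ) : ℚ) = (n : ℚ) - i := by
      push_cast [Nat.cast_sub hi.le]; ring
    rw [this]
    simp [comp, eval₂_add]
    ring
  rw [Finset.prod_congr rfl h1]
  have : ∀ x ∈ Finset.range n, -(X + C (((n - x : ℕ)):ℚ)) =
      (-1 : Polynomial ℚ) * (X + C (((n - x : ℕ)):ℚ)) := by intros; ring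
  rw [Finset.prod_congr rfl this, Finset.prod_mul_distrib, Finset.prod_const,
    Finset.card_range]
  congr 1
  have h2 : ∀ i ∈ Finset.range n, (X + C (((n - i : ℕ)):ℚ)) =
      (fun j => X + C (((j+1 : ℕ)):ℚ)) (n - 1 - i) := by
    intro i hi
    simp only [Finset.mem_range] at hi
    congr 1
    exact Nat.cast_inj.mpr (by omega)
  rw [Finset.prod_congr rfl h2,
    Finset.prod_range_reflect (fun j => X + C (((j+1:ℕ)):ℚ)) n]
  obtain ⟨m, rfl⟩ : ∃ m, n = m + 1 := ⟨n-1, by omega⟩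
  rw [Finset.prod_range_succ]
  push_cast
  ring

lemma hQ_eq (n : ℕ) (hn : 1 ≤ n) :
    ∏ j ∈ Finset.range (n-1), (X + C ((j:ℚ)+1)) =
      ∑ i ∈ Finset.range n,
        C ((∏ l ∈ Finset.range n, (X + C (l:ℚ))).coeff (i+1)) * (-1)^(n+i+1)
          * (X + C (n:ℚ))^i := by
  set P : Polynomial ℚ := ∏ l ∈ Finset.range n, (X + C (l:ℚ)) with hP
  set Q : Polynomial ℚ := ∏ j ∈ Finset.range (n-1), (X + C ((j:ℚ)+1)) with hQ
  have h1 : P.comp (-(X + C (n:ℚ))) =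
      ∑ i ∈ Finset.range (n+1), C (P.coeff i) * (-(X + C (n:ℚ)))^i := by
    rw [Polynomial.comp]
    exact Polynomial.eval₂_eq_sum_range' _ (lt_of_le_of_lt (degP n) (Nat.lt_succ_self n)) _
  have h0 : P.coeff 0 = 0 := by
    rw [hP, hPQ n hn, Polynomial.mul_coeff_zero]; simp
  have h2 := hComp n hn
  rw [h1, Finset.sum_range_succ', h0] at h2
  simp only [map_zero, zero_mul, add_zero] at h2
  have hxc : (X + C (n:ℚ)) ≠ 0 := Polynomial.X_add_C_ne_zero (n:ℚ)
  apply mul_left_cancel₀ hxc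
  have hsq : ((-1 : Polynomial ℚ)^n) * ((-1 : Polynomial ℚ)^n) = 1 := by
    rw [← pow_add, Even.neg_one_pow (Even.add_self n)]
  calc (X + C (n:ℚ)) * Q
      = ((-1:Polynomial ℚ)^n * ((-1:Polynomial ℚ)^n)) * ((X + C (n:ℚ)) * Q) := by
        rw [hsq, one_mul]
    _ = (-1:Polynomial ℚ)^n * ∑ k ∈ Finset.range n,
          C (P.coeff (k + 1)) * (-(X + C (n:ℚ))) ^ (k + 1) := by
        rw [mul_assoc, ← h2]
    _ = (X + C (n:ℚ)) * ∑ i ∈ Finset.range n,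
          C (P.coeff (i+1)) * (-1)^(n+i+1) * (X + C (n:ℚ))^i := by
        rw [Finset.mul_sum, Finset.mul_sum]
        refine Finset.sum_congr rfl fun i _ => ?_
        have hneg : (-(X + C (n:ℚ)))^(i+1) = (-1)^(i+1) * (X + C (n:ℚ))^(i+1) := by
          rw [← neg_one_mul, mul_pow]
        rw [hneg, pow_add, pow_add, pow_one]
        ring

lemma coeff_eq (n k : ℕ) (hn : 1 ≤ n) (hk : 1 ≤ k) :
    (∏ l ∈ Finset.range n, (X + C (l:ℚ))).coeff k =
      ∑ i ∈ Finset.range n, (∏ l ∈ Finset.range n, (X + C (l:ℚ))).coeff (i+1)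
        * (-1:ℚ)^(n+i+1) * ((n:ℚ)^(i-(k-1)) * ((i.choose (k-1) : ℚ))) := by
  conv_lhs => rw [hPQ n hn]
  obtain ⟨k', rfl⟩ : ∃ k', k = k'+1 := ⟨k-1, by omega⟩
  rw [Polynomial.coeff_X_mul, hQ_eq n hn, Polynomial.finset_sum_coeff]
  refine Finset.sum_congr rfl fun i _ => ?_
  have h3 : C ((∏ l ∈ Finset.range n, (X + C (l:ℚ))).coeff (i+1)) * (-1)^(n+i+1)
        * (X + C (n:ℚ))^i
       = C ((∏ l ∈ Finset.range n, (X + C (l:ℚ))).coeff (i+1) * (-1:ℚ)^(n+i+1))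
        * (X + C (n:ℚ))^i := by
    simp
  rw [h3, Polynomial.coeff_C_mul, Polynomial.coeff_X_add_C_pow]
  simp only [Nat.add_sub_cancel]

theorem stmt6 (n k : ℕ) (hn : 1 ≤ n) (hk : 1 ≤ k) (hodd : Odd (n + k)) :
    (sF n k : ℚ) = (1 / 2) *
      ∑ i ∈ Finset.Icc (k + 1) n,
        (sF n i : ℚ) * ((i - 1).choose (i - k)) * (n : ℚ) ^ (i - k) * (-1) ^ (n - i) := by
  simp only [sF_cast]
  by_cases hkn : k ≤ n
  · set a : ℕ → ℚ := fun j => (∏ l ∈ Finset.range n, (X + C (l:ℚ))).coeff j with ha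
    set f : ℕ → ℚ := fun i =>
      a (i+1) * (-1:ℚ)^(n+i+1) * ((n:ℚ)^(i-(k-1)) * ((i.choose (k-1)) : ℚ)) with hf
    have hkey : a k = ∑ i ∈ Finset.range n, f i := coeff_eq n k hn hk
    have hs1 : ∑ i ∈ Finset.range n, f i =
        (∑ i ∈ Finset.Ico 0 k, f i) + ∑ i ∈ Finset.Ico k n, f i := by
      rw [Finset.sum_Ico_consecutive f (Nat.zero_le k) hkn, Finset.range_eq_Ico]
    have hs2 : ∑ i ∈ Finset.Ico 0 k, f i = - a k := by
      rw [Finset.sum_eq_single (k-1)]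
      · rw [hf]; simp only
        have h4 : n + (k-1) + 1 = n + k := by omega
        have h5 : (k-1) - (k-1) = 0 := by omega
        have h6 : k - 1 + 1 = k := by omega
        rw [h4, h5, h6]
        simp [Nat.choose_self, Odd.neg_one_pow hodd]
      · intro i hi hne
        have hlt : i < k - 1 := by simp only [Finset.mem_Ico] at hi; omega
        simp [hf, Nat.choose_eq_zero_of_lt hlt]
      · intro h; exact absurd (Finset.mem_Ico.mpr ⟨Nat.zero_le _, by omega⟩) h
    have hs3 : ∑ i ∈ Finset.Ico k n, f i =
        ∑ j ∈ Finset.Icc (k+1) n,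
          a j * (((j-1).choose (j-k)) : ℚ) * (n:ℚ)^(j-k) * (-1:ℚ)^(n-j) := by
      rw [← Finset.Ico_add_one_right_eq_Icc, Finset.sum_Ico_eq_sum_range, Finset.sum_Ico_eq_sum_range]
      have hnk : n + 1 - (k+1) = n - k := by omega
      rw [hnk]
      refine Finset.sum_congr rfl fun i hi => ?_
      simp only [Finset.mem_range] at hi
      rw [hf]; simp only
      have e1 : k + i + 1 - 1 = k + i := by omega
      have e2 : k + i + 1 - k = i + 1 := by omega
      have e3 : k + i - (k-1) = i+1 := by omega
      have e4 : k + 1 + i = (k + i) + 1 := by omega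
      have echoose : (k+i).choose (k-1) = (k+i).choose (i+1) := by
        rw [← Nat.choose_symm (by omega : k-1 ≤ k+i)]
        congr 1
      have esign : (-1:ℚ)^(n + (k+i) + 1) = (-1:ℚ)^(n - ((k+i)+1)) := by
        have h7 : n + (k+i) + 1 = (n - ((k+i)+1)) + 2*((k+i)+1) := by omega
        rw [h7, pow_add, pow_mul]
        norm_num
      rw [e4, e1, e2, e3, echoose, esign]
      ring
    rw [hs1, hs2, hs3] at hkey
    linarith
  · have h1 : (∏ l ∈ Finset.range n, (X + C (l:ℚ))).coeff k = 0 :=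
      Polynomial.coeff_eq_zero_of_natDegree_lt (lt_of_le_of_lt (degP n) (by omega))
    rw [h1, Finset.Icc_eq_empty (by omega), Finset.sum_empty, mul_zero]
end

section
/- For all integers n ≥ 2, v₂(s(2^n, 2^n - 2)) = n - 2, where s is the unsigned Stirling number of the first kind. -/
open Polynomial Finset

lemma sF_rec (n k : ℕ) : sF (n+1) (k+1) = sF n k + n * sF n (k+1) := by
  unfold sF
  rw [Finset.prod_range_succ, mul_add, coeff_add, coeff_mul_X, coeff_mul_C]
  ring

lemma sF_diag (n : ℕ) : sF n n = 1 := by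
  unfold sF
  have hm : (∏ i ∈ Finset.range n, (X + C i : Polynomial ℕ)).Monic :=
    monic_prod_of_monic _ _ fun i _ => monic_X_add_C i
  have hd : (∏ i ∈ Finset.range n, (X + C i : Polynomial ℕ)).natDegree = n := by
    rw [natDegree_prod _ _ (fun i _ => (monic_X_add_C (i:ℕ)).ne_zero)]
    simp only [← C_eq_natCast, natDegree_X_add_C, Finset.sum_const, smul_eq_mul, mul_one,
      Finset.card_range]
  have h := hm.coeff_natDegree
  rwa [hd] at h

lemma sF_sub1 (n : ℕ) : 2 * sF (n+1) n = (n+1) * n := by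
  induction n with
  | zero => simp [sF]
  | succ m ih =>
    rw [sF_rec, sF_diag]
    ring_nf
    ring_nf at ih
    omega

lemma sF_sub2 (n : ℕ) : 24 * sF (n+2) n = (3*n+5) * (n+2) * (n+1) * n := by
  induction n with
  | zero => simp [sF, coeff_zero_eq_eval_zero, Finset.prod_range_succ]
  | succ m ih =>
    rw [sF_rec]
    have h1 := sF_sub1 (m+1)
    ring_nf
    ring_nf at ih h1
    nlinarith [ih, h1]

theorem stmt15 (n : ℕ) (hn : 2 ≤ n) :
    padicValNat 2 (sF (2 ^ n) (2 ^ n - 2)) = n - 2 := by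
  haveI : Fact (Nat.Prime 2) := ⟨Nat.prime_two⟩
  set k := 2 ^ n - 2 with hkdef
  have h4 : 4 ≤ 2 ^ n := by
    calc (4:ℕ) = 2 ^ 2 := by norm_num
    _ ≤ 2 ^ n := Nat.pow_le_pow_right (by norm_num) hn
  have hk2 : k + 2 = 2 ^ n := by omega
  have hsplit : 2 ^ n = 2 * 2 ^ (n - 1) := by
    conv_lhs => rw [show n = (n-1) + 1 by omega]
    rw [pow_succ']
  have hsplit2 : 2 ^ (n - 1) = 2 * 2 ^ (n - 2) := by
    conv_lhs => rw [show n - 1 = (n-2) + 1 by omega]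
    rw [pow_succ']
  set t := 2 ^ (n - 1) - 1 with htdef
  have ht1 : 2 ^ (n - 2) ≥ 1 := Nat.one_le_two_pow
  have hkt : k = 2 * t := by omega
  have hf : 24 * sF (2 ^ n) k = (3*k+5) * (k+2) * (k+1) * k := by
    rw [← hk2]; exact sF_sub2 k
  have hk2pos : 2 ≤ k := by omega
  have hs0 : sF (2 ^ n) k ≠ 0 := by
    intro h
    rw [h, mul_zero] at hf
    have hpos : 0 < (3*k+5) * (k+2) * (k+1) * k :=
      Nat.mul_pos (Nat.mul_pos (Nat.mul_pos (by omega) (by omega)) (by omega)) (by omega)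
    omega
  have h24 : padicValNat 2 24 = 3 := by
    rw [show (24:ℕ) = 2^3*3 by norm_num, padicValNat.mul (by norm_num) (by norm_num),
      padicValNat.prime_pow, padicValNat.eq_zero_of_not_dvd (by norm_num)]
  have hv24 : padicValNat 2 (24 * sF (2 ^ n) k) =
      3 + padicValNat 2 (sF (2 ^ n) k) := by
    rw [padicValNat.mul (by norm_num) hs0, h24]
  have hvR : padicValNat 2 ((3*k+5) * (k+2) * (k+1) * k) = n + 1 := by
    rw [padicValNat.mul (by positivity) (by omega),
        padicValNat.mul (by positivity) (by omega),
        padicValNat.mul (by positivity) (by omega)]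
    have e1 : padicValNat 2 (3*k+5) = 0 :=
      padicValNat.eq_zero_of_not_dvd (by omega)
    have e2 : padicValNat 2 (k+2) = n := by
      rw [hk2]; exact padicValNat.prime_pow n
    have e3 : padicValNat 2 (k+1) = 0 :=
      padicValNat.eq_zero_of_not_dvd (by omega)
    have e4 : padicValNat 2 k = 1 := by
      rw [hkt, padicValNat.mul (by norm_num) (by omega)]
      rw [padicValNat.self (by norm_num),
        padicValNat.eq_zero_of_not_dvd (show ¬ 2 ∣ t by omega)]
    omega
  rw [hf] at hv24
  omega
end

section
/- For all integers n ≥ 1, v₂(s(2^n, 2)) = 2^n - 2n, where s is the unsigned Stirling number of the first kind. -/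
/-!
Expanding `x(x+1)⋯(x+m)` gives `s(m+1, 2) = m! · H_m`. For `m = 2^n - 1`, Legendre's formula
gives `v₂(m!) = m - n`, since `m` has `n` binary digits, all equal to one, while
`v₂(H_m) = -⌊log₂ m⌋ = -(n - 1)`.
-/

open Polynomial Finset

open Nat

lemma sF_zero (k : ℕ) : sF 0 k = if k = 0 then 1 else 0 := by
  simp [sF, coeff_one]

lemma sF_succ_zero (n : ℕ) : sF (n + 1) 0 = 0 := by
  simp [sF, prod_range_succ', coeff_zero_eq_eval_zero]

lemma sF_succ_succ (n k : ℕ) : sF (n + 1) (k + 1) = n * sF n (k + 1) + sF n k := by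
  rw [sF, sF, sF, prod_range_succ, mul_add, coeff_add, coeff_mul_X, coeff_mul_C]
  ring

lemma sF_succ_one (n : ℕ) : sF (n + 1) 1 = n ! := by
  induction n with
  | zero => simp [sF_succ_succ, sF_zero]
  | succ n ih => rw [sF_succ_succ, ih, sF_succ_zero, factorial_succ]; ring

lemma sF_succ_two (n : ℕ) : (sF (n + 1) 2 : ℚ) = n ! * harmonic n := by
  induction n with
  | zero => simp [sF_succ_succ, sF_zero]
  | succ n ih =>
    rw [sF_succ_succ, sF_succ_one]
    push_cast [ih, harmonic_succ, factorial_succ]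
    field_simp

theorem Nat.digits_pow_sub_one {b : ℕ} (hb : 1 < b) (n : ℕ) :
    b.digits (b ^ n - 1) = List.replicate n (b - 1) := by
  induction n with
  | zero => simp
  | succ n ih =>
    have hpow : 1 ≤ b ^ n := one_le_pow n b (by omega)
    have hsplit : b ^ (n + 1) - 1 = (b - 1) + b * (b ^ n - 1) := by
      have : b ≤ b * b ^ n := Nat.le_mul_of_pos_right b hpow
      rw [pow_succ', Nat.mul_sub_one]
      omega
    rw [hsplit, Nat.digits_add b hb _ _ (by omega) (by omega), ih, List.replicate_succ]

theorem Nat.log_pow_sub_one {b : ℕ} (hb : 1 < b) (n : ℕ) : Nat.log b (b ^ n - 1) = n - 1 := by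
  rcases n.eq_zero_or_pos with rfl | hn
  · simp
  refine Nat.log_eq_of_pow_le_of_lt_pow ?_ ?_
  · have := Nat.pow_lt_pow_right hb (Nat.sub_lt hn one_pos)
    omega
  · rw [Nat.sub_add_cancel hn]
    exact Nat.sub_lt (Nat.pow_pos (by omega)) one_pos

lemma padicValNat_two_factorial_two_pow_sub_one (n : ℕ) :
    padicValNat 2 (2 ^ n - 1)! = 2 ^ n - 1 - n := by
  simpa [Nat.digits_pow_sub_one one_lt_two] using
    sub_one_mul_padicValNat_factorial (p := 2) (2 ^ n - 1)

theorem stmt16 (n : ℕ) (hn : 1 ≤ n) :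
    (padicValNat 2 (sF (2 ^ n) 2) : ℤ) = 2 ^ n - 2 * (n : ℤ) := by
  have hn_lt : n < 2 ^ n := Nat.lt_two_pow_self
  set m := 2 ^ n - 1 with hm
  have hm0 : m ≠ 0 := by omega
  calc (padicValNat 2 (sF (2 ^ n) 2) : ℤ)
      = padicValRat 2 (m ! * harmonic m) := by
        rw [← sF_succ_two, Nat.sub_add_cancel (Nat.one_le_two_pow), padicValRat.of_nat]
    _ = padicValNat 2 m ! - Nat.log 2 m := by
        rw [padicValRat.mul (by positivity) (harmonic_pos hm0).ne', padicValRat.of_nat,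
          padicValRat_two_harmonic, sub_eq_add_neg]
    _ = 2 ^ n - 2 * n := by
        rw [hm, padicValNat_two_factorial_two_pow_sub_one, Nat.log_pow_sub_one one_lt_two]
        have hpow_cast : ((2 ^ n : ℕ) : ℤ) = 2 ^ n := by push_cast; rfl
        omega
end

section
/- For every positive integer m, the 2-adic valuation of the harmonic number H_m = Σ_{k=1}^{m} 1/k equals -⌊log₂ m⌋. -/
open Polynomial Finset

lemma val_one_div (i : ℕ) (hi : 1 ≤ i) :
    padicValRat 2 ((1:ℚ)/i) = -(padicValNat 2 i : ℤ) := by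
  rw [one_div, padicValRat.inv, padicValRat.of_nat]


theorem stmt17 (m : ℕ) (hm : 1 ≤ m) :
    padicValRat 2 (∑ k ∈ Finset.Icc 1 m, (1 : ℚ) / k) = -(Nat.log 2 m : ℤ) := by
  set n := Nat.log 2 m with hn
  set F : ℕ → ℚ := fun i => 1 / (max i 1) with hF
  have hFpos : ∀ i, 0 < F i := fun i => by positivity
  have hFeq : ∀ i ∈ Finset.Icc 1 m, F i = (1:ℚ)/i := by
    intro i hi
    simp only [hF, Nat.max_eq_left (mem_Icc.mp hi).1]
  have hmem : 2^n ∈ Finset.Icc 1 m :=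
    mem_Icc.mpr ⟨Nat.one_le_two_pow, Nat.pow_log_le_self 2 (by omega)⟩
  have hvj : padicValRat 2 (F (2^n)) = -(n:ℤ) := by
    rw [hFeq _ hmem, val_one_div _ Nat.one_le_two_pow,
      padicValNat.prime_pow]
  have hlt : ∀ i ∈ Finset.Icc 1 m \ {2^n},
      padicValRat 2 (F (2^n)) < padicValRat 2 (F i) := by
    intro i hi
    obtain ⟨hi1, hine⟩ := mem_sdiff.mp hi
    obtain ⟨h1, h2⟩ := mem_Icc.mp hi1
    rw [hvj, hFeq _ hi1, val_one_div _ h1]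
    have hv : padicValNat 2 i < n := by
      by_contra h
      push_neg at h
      have : 2^n ∣ i := dvd_trans (pow_dvd_pow 2 h) pow_padicValNat_dvd
      obtain ⟨c, hc⟩ := this
      have him : i < 2^(n+1) := Nat.lt_pow_succ_log_self (by norm_num) m |>.trans_le' (by omega)
      have hc2 : c < 2 := by
        by_contra hc2
        push_neg at hc2
        have : 2^n * 2 ≤ i := hc ▸ Nat.mul_le_mul_left _ hc2
        rw [pow_succ] at him; omega
      interval_cases c
      · omega
      · exact hine (by simp [hc])
    omega
  have hkey : padicValRat 2 (∑ k ∈ Finset.Icc 1 m, F k) = -(n:ℤ) := by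
    rw [← Finset.add_sum_erase _ _ hmem]
    by_cases hS : (Finset.Icc 1 m).erase (2^n) = ∅
    · rw [hS]; simpa using hvj
    · have hSne : ((Finset.Icc 1 m).erase (2^n)).Nonempty :=
        Finset.nonempty_iff_ne_empty.mpr hS
      have hsum_pos : 0 < ∑ i ∈ (Finset.Icc 1 m).erase (2^n), F i :=
        Finset.sum_pos (fun i _ => hFpos i) hSne
      have hlt' : padicValRat 2 (F (2^n)) <
          padicValRat 2 (∑ i ∈ (Finset.Icc 1 m).erase (2^n), F i) := by
        apply padicValRat.lt_sum_of_lt hSne _ hFpos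
        intro i hi
        exact hlt i (by simpa [Finset.erase_eq] using hi)
      rw [padicValRat.add_eq_of_lt _ (hFpos _).ne' hsum_pos.ne' hlt', hvj]
      positivity
  rw [← hkey]
  congr 1
  exact Finset.sum_congr rfl (fun i hi => (hFeq i hi).symm)
end

section
/- For positive integers n ≥ m, v₂(s(2^n, 2^m)) = 2^n - 2^m·(n - m + 1), where s is the unsigned Stirling number of the first kind. -/
open Polynomial Finset

namespace Stmt18Aux

/-- The ground set `{1, …, 2^n - 1}`. -/
def S2 (n : ℕ) : Finset ℕ := Finset.Icc 1 (2 ^ n - 1)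

/-- Number of elements of `T` divisible by `2^j`. -/
def cj (T : Finset ℕ) (j : ℕ) : ℕ := (T.filter (fun t => 2 ^ j ∣ t)).card

/-- Sum of the 2-adic valuations of the elements of `T`. -/
def W2 (T : Finset ℕ) : ℕ := ∑ t ∈ T, (Nat.factorization t) 2

/-- The set of multiples of `2^(n-m)` in the ground set. -/
def Tstar (n m : ℕ) : Finset ℕ := (S2 n).filter (fun t => 2 ^ (n - m) ∣ t)

lemma pow_sub_one_div {n j : ℕ} (h : j ≤ n) : (2 ^ n - 1) / 2 ^ j = 2 ^ (n - j) - 1 := by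
  have h2 : 1 ≤ 2 ^ j := Nat.one_le_two_pow
  have h3 : 1 ≤ 2 ^ (n - j) := Nat.one_le_two_pow
  obtain ⟨c, hc⟩ : ∃ c, 2 ^ (n - j) = c + 1 := ⟨2 ^ (n - j) - 1, by omega⟩
  have h1 : 2 ^ n = 2 ^ j * 2 ^ (n - j) := by rw [← pow_add]; congr 1; omega
  rw [h1, hc, Nat.mul_add, Nat.mul_one, Nat.mul_comm,
    Nat.add_sub_assoc h2, Nat.add_comm, Nat.add_mul_div_right _ _ (by positivity : 0 < 2 ^ j),
    Nat.div_eq_of_lt (by omega)]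
  omega

lemma cj_S2 {n j : ℕ} (h : j ≤ n) : cj (S2 n) j = 2 ^ (n - j) - 1 := by
  have hS : S2 n = Finset.Ioc 0 (2 ^ n - 1) := by
    ext x; simp only [S2, mem_Icc, mem_Ioc]; omega
  rw [cj, hS, Nat.Ioc_filter_dvd_card_eq_div, pow_sub_one_div h]

lemma fact_le {n t : ℕ} (h1 : 1 ≤ t) (h2 : t < 2 ^ n) : (Nat.factorization t) 2 ≤ n - 1 := by
  have hd : 2 ^ ((Nat.factorization t) 2) ∣ t := Nat.ordProj_dvd t 2
  have hle : 2 ^ ((Nat.factorization t) 2) ≤ t := Nat.le_of_dvd h1 hd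
  have hlt : (Nat.factorization t) 2 < n :=
    (Nat.pow_lt_pow_iff_right one_lt_two).mp (lt_of_le_of_lt hle h2)
  have hn : 1 ≤ n := by
    rcases Nat.eq_zero_or_pos n with rfl | h
    · simp at h2; omega
    · exact h
  omega

lemma fact_card {n t : ℕ} (h1 : 1 ≤ t) (h2 : t < 2 ^ n) :
    ((Finset.Icc 1 (n - 1)).filter (fun j => 2 ^ j ∣ t)).card = (Nat.factorization t) 2 := by
  have hf := fact_le h1 h2
  have heq : (Finset.Icc 1 (n - 1)).filter (fun j => 2 ^ j ∣ t)
      = Finset.Icc 1 ((Nat.factorization t) 2) := by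
    ext j
    simp only [mem_filter, mem_Icc]
    constructor
    · rintro ⟨⟨hj1, hj2⟩, hdvd⟩
      exact ⟨hj1, (Nat.Prime.pow_dvd_iff_le_factorization Nat.prime_two (by omega)).mp hdvd⟩
    · rintro ⟨hj1, hj2⟩
      exact ⟨⟨hj1, by omega⟩,
        (Nat.Prime.pow_dvd_iff_le_factorization Nat.prime_two (by omega)).mpr hj2⟩
  rw [heq, Nat.card_Icc]
  omega

lemma W2_eq {n : ℕ} {T : Finset ℕ} (hT : T ⊆ S2 n) :
    W2 T = ∑ j ∈ Finset.Icc 1 (n - 1), cj T j := by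
  unfold W2 cj
  have hstep : ∀ t ∈ T, (Nat.factorization t) 2
      = ∑ j ∈ Finset.Icc 1 (n - 1), if 2 ^ j ∣ t then 1 else 0 := by
    intro t ht
    have hmem := hT ht
    simp only [S2, mem_Icc] at hmem
    have h2 : t < 2 ^ n := by have : 1 ≤ 2 ^ n := Nat.one_le_two_pow; omega
    rw [← fact_card hmem.1 h2, Finset.card_filter]
  rw [Finset.sum_congr rfl hstep, Finset.sum_comm]
  exact Finset.sum_congr rfl fun j _ => (Finset.card_filter _ _).symm

lemma cj_mono {T T' : Finset ℕ} (h : T ⊆ T') (j : ℕ) : cj T j ≤ cj T' j :=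
  Finset.card_le_card (Finset.filter_subset_filter _ h)

lemma card_Tstar {n m : ℕ} (hmn : m ≤ n) : (Tstar n m).card = 2 ^ m - 1 := by
  have h := cj_S2 (n := n) (j := n - m) (by omega)
  rw [show n - (n - m) = m by omega] at h
  exact h

lemma cj_Tstar_ge {n m j : ℕ} (h : n - m ≤ j) : cj (Tstar n m) j = cj (S2 n) j := by
  unfold cj Tstar
  congr 1
  ext x
  simp only [mem_filter]
  exact ⟨fun ⟨⟨hx, _⟩, hd⟩ => ⟨hx, hd⟩, fun ⟨hx, hd⟩ => ⟨⟨hx, (pow_dvd_pow 2 h).trans hd⟩, hd⟩⟩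

lemma cj_Tstar_le {n m j : ℕ} (hmn : m ≤ n) (h : j ≤ n - m) :
    cj (Tstar n m) j = 2 ^ m - 1 := by
  have heq : (Tstar n m).filter (fun t => 2 ^ j ∣ t) = Tstar n m := by
    apply Finset.filter_true_of_mem
    intro x hx
    simp only [Tstar, mem_filter] at hx
    exact (pow_dvd_pow 2 h).trans hx.2
  rw [cj, heq, card_Tstar hmn]

/-- The key strict inequality: among all subsets of the ground set of size `2^m - 1`,
`Tstar n m` is the unique maximiser of the total 2-adic valuation. -/
lemma W2_lt {n m : ℕ} (hm : 1 ≤ m) (hmn : m ≤ n) {T : Finset ℕ}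
    (hT : T ⊆ S2 n) (hcard : T.card = 2 ^ m - 1) (hne : T ≠ Tstar n m) :
    W2 T < W2 (Tstar n m) := by
  rcases eq_or_lt_of_le hmn with rfl | hlt
  · exfalso
    apply hne
    have hS : (S2 m).card = 2 ^ m - 1 := by simp [S2]
    have hTS : T = S2 m := Finset.eq_of_subset_of_card_le hT (by omega)
    have hTs : Tstar m m = S2 m := by
      apply Finset.filter_true_of_mem
      intro x _
      simp
    rw [hTS, hTs]
  · have hTs : Tstar n m ⊆ S2 n := Finset.filter_subset _ _
    rw [W2_eq hT, W2_eq hTs]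
    apply Finset.sum_lt_sum
    · intro j hj
      simp only [mem_Icc] at hj
      rcases le_or_gt j (n - m) with h | h
      · rw [cj_Tstar_le hmn h]
        calc cj T j ≤ T.card := Finset.card_filter_le _ _
          _ = 2 ^ m - 1 := hcard
      · rw [cj_Tstar_ge (le_of_lt h)]
        exact cj_mono hT j
    · refine ⟨n - m, ?_, ?_⟩
      · simp only [mem_Icc]; omega
      · rw [cj_Tstar_le hmn le_rfl]
        obtain ⟨t, htT, htn⟩ : ∃ t ∈ T, t ∉ Tstar n m := by
          by_contra h'
          push_neg at h'
          exact hne (Finset.eq_of_subset_of_card_le h'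
            (by rw [hcard, card_Tstar hmn]))
        have hnd : ¬ 2 ^ (n - m) ∣ t := fun hd =>
          htn (Finset.mem_filter.mpr ⟨hT htT, hd⟩)
        have hsub : T.filter (fun t => 2 ^ (n - m) ∣ t) ⊆ T.erase t := by
          intro x hx
          simp only [mem_filter] at hx
          exact Finset.mem_erase.mpr ⟨fun he => hnd (he ▸ hx.2), hx.1⟩
        have h2m : 2 ≤ 2 ^ m := by
          calc 2 = 2 ^ 1 := (pow_one 2).symm
            _ ≤ 2 ^ m := Nat.pow_le_pow_right (by norm_num) hm
        calc cj T (n - m) ≤ (T.erase t).card := Finset.card_le_card hsub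
          _ = T.card - 1 := Finset.card_erase_of_mem htT
          _ < 2 ^ m - 1 := by omega

lemma sF_eq {N k : ℕ} (hk : 1 ≤ k) (hkN : k ≤ N) :
    sF N k = ∑ A ∈ (Finset.Icc 1 (N - 1)).powersetCard (N - k), ∏ a ∈ A, a := by
  unfold sF
  rw [Finset.prod_X_add_C_coeff (Finset.range N) (fun i => i) (by simpa using hkN)]
  rw [Finset.card_range]
  symm
  apply Finset.sum_subset
  · apply Finset.powersetCard_mono
    intro x hx
    simp only [mem_Icc] at hx
    simp only [mem_range]
    omega
  · intro A hA hA'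
    simp only [Finset.mem_powersetCard] at hA hA'
    have h0 : (0 : ℕ) ∈ A := by
      by_contra h0
      apply hA'
      refine ⟨?_, hA.2⟩
      intro x hx
      have hxr := hA.1 hx
      simp only [mem_range] at hxr
      simp only [mem_Icc]
      have : x ≠ 0 := fun he => h0 (he ▸ hx)
      omega
    exact Finset.prod_eq_zero h0 rfl

lemma prod_ne_zero {A : Finset ℕ} (hA : ∀ a ∈ A, a ≠ 0) : (∏ a ∈ A, a) ≠ 0 :=
  Finset.prod_ne_zero_iff.mpr hA

lemma prod_fact {A : Finset ℕ} (hA : ∀ a ∈ A, a ≠ 0) :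
    (Nat.factorization (∏ a ∈ A, a)) 2 = W2 A := by
  rw [Nat.factorization_prod hA]
  unfold W2
  rw [Finset.sum_apply']

lemma geom_sum_int {n r : ℕ} (h : r ≤ n) :
    ∑ j ∈ Finset.Icc 1 r, (2 : ℤ) ^ (n - j) = 2 ^ n - 2 ^ (n - r) := by
  induction r with
  | zero => simp
  | succ r ih =>
    rw [Finset.sum_Icc_succ_top (by omega : 1 ≤ r + 1), ih (by omega)]
    have h2 : (2 : ℤ) ^ (n - r) = 2 * 2 ^ (n - (r + 1)) := by
      rw [← pow_succ']
      congr 1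
      omega
    linarith

end Stmt18Aux

open Stmt18Aux in
theorem stmt18 (n m : ℕ) (hm : 1 ≤ m) (hmn : m ≤ n) :
    (padicValNat 2 (sF (2 ^ n) (2 ^ m)) : ℤ) =
      2 ^ n - 2 ^ m * ((n : ℤ) - m + 1) := by
  classical
  have hp2 : Nat.Prime 2 := Nat.prime_two
  have hpow : (2 : ℕ) ^ m ≤ 2 ^ n := Nat.pow_le_pow_right (by norm_num) hmn
  have h1m : 1 ≤ (2 : ℕ) ^ m := Nat.one_le_two_pow
  have h1n : 1 ≤ (2 : ℕ) ^ n := Nat.one_le_two_pow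
  set S : Finset ℕ := S2 n with hS
  set A₀ : Finset ℕ := S \ Tstar n m with hA0
  set E : ℕ := W2 A₀ with hE
  have hTsub : Tstar n m ⊆ S := Finset.filter_subset _ _
  have hcardS : S.card = 2 ^ n - 1 := by simp [hS, S2]
  have hcardT : (Tstar n m).card = 2 ^ m - 1 := card_Tstar hmn
  have hcardA0 : A₀.card = 2 ^ n - 2 ^ m := by
    rw [hA0, Finset.card_sdiff_of_subset hTsub, hcardS, hcardT]; omega
  have hA0sub : A₀ ⊆ S := Finset.sdiff_subset
  have hSne : ∀ x ∈ S, x ≠ 0 := by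
    intro x hx; simp only [hS, S2, mem_Icc] at hx; omega
  -- Vieta
  set P : Finset (Finset ℕ) := S.powersetCard (2 ^ n - 2 ^ m) with hP
  have hsf : sF (2 ^ n) (2 ^ m) = ∑ A ∈ P, ∏ a ∈ A, a := sF_eq h1m hpow
  have hA0P : A₀ ∈ P := Finset.mem_powersetCard.mpr ⟨hA0sub, hcardA0⟩
  set R : ℕ := ∑ A ∈ P.erase A₀, ∏ a ∈ A, a with hR
  have hsplit : sF (2 ^ n) (2 ^ m) = (∏ a ∈ A₀, a) + R := by
    rw [hsf, ← Finset.add_sum_erase _ _ hA0P]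
  -- the main term
  have hA0ne : ∀ a ∈ A₀, a ≠ 0 := fun a ha => hSne a (hA0sub ha)
  have hprodne : (∏ a ∈ A₀, a) ≠ 0 := prod_ne_zero hA0ne
  have hfactA0 : (Nat.factorization (∏ a ∈ A₀, a)) 2 = E := prod_fact hA0ne
  -- the key estimate for other subsets
  have hkey : ∀ A ∈ P.erase A₀, E + 1 ≤ W2 A := by
    intro A hA
    obtain ⟨hAne, hAP⟩ := Finset.mem_erase.mp hA
    obtain ⟨hAsub, hAcard⟩ := Finset.mem_powersetCard.mp hAP
    set T : Finset ℕ := S \ A with hT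
    have hTsub' : T ⊆ S := Finset.sdiff_subset
    have hTcard : T.card = 2 ^ m - 1 := by
      rw [hT, Finset.card_sdiff_of_subset hAsub, hcardS, hAcard]; omega
    have hArec : S \ T = A := Finset.sdiff_sdiff_eq_self hAsub
    have hTne : T ≠ Tstar n m := by
      intro he
      exact hAne (by rw [← hArec, he])
    have hlt : W2 T < W2 (Tstar n m) := W2_lt hm hmn hTsub' hTcard hTne
    have h1 : W2 A + W2 T = W2 S := by
      rw [← hArec]
      exact Finset.sum_sdiff hTsub'
    have h2 : E + W2 (Tstar n m) = W2 S := Finset.sum_sdiff hTsub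
    omega
  -- divisibility facts
  have hdvdR : 2 ^ (E + 1) ∣ R := by
    apply Finset.dvd_sum
    intro A hA
    have hWA := hkey A hA
    obtain ⟨hAne, hAP⟩ := Finset.mem_erase.mp hA
    obtain ⟨hAsub, _⟩ := Finset.mem_powersetCard.mp hAP
    have hAne0 : ∀ a ∈ A, a ≠ 0 := fun a ha => hSne a (hAsub ha)
    have hne : (∏ a ∈ A, a) ≠ 0 := prod_ne_zero hAne0
    rw [Nat.Prime.pow_dvd_iff_le_factorization hp2 hne, prod_fact hAne0]
    exact hWA
  have htot : sF (2 ^ n) (2 ^ m) ≠ 0 := by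
    rw [hsplit]
    intro h
    exact hprodne (by omega)
  have hdvdE : 2 ^ E ∣ sF (2 ^ n) (2 ^ m) := by
    rw [hsplit]
    exact dvd_add
      ((Nat.Prime.pow_dvd_iff_le_factorization hp2 hprodne).mpr (le_of_eq hfactA0.symm))
      ((pow_dvd_pow 2 (by omega)).trans hdvdR)
  have hndvd : ¬ 2 ^ (E + 1) ∣ sF (2 ^ n) (2 ^ m) := by
    intro hdvd
    have hdp : 2 ^ (E + 1) ∣ (∏ a ∈ A₀, a) := by
      have hsub := Nat.dvd_sub hdvd hdvdR
      rwa [hsplit, Nat.add_sub_cancel] at hsub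
    rw [Nat.Prime.pow_dvd_iff_le_factorization hp2 hprodne, hfactA0] at hdp
    omega
  have hval : padicValNat 2 (sF (2 ^ n) (2 ^ m)) = E := by
    rw [← Nat.factorization_def _ hp2]
    refine le_antisymm ?_ ?_
    · by_contra h
      push_neg at h
      exact hndvd ((Nat.Prime.pow_dvd_iff_le_factorization hp2 htot).mpr (by omega))
    · exact (Nat.Prime.pow_dvd_iff_le_factorization hp2 htot).mp hdvdE
  rw [hval]
  -- now compute `(E : ℤ)`
  have hsumj : ∀ j, cj A₀ j + cj (Tstar n m) j = cj S j := by
    intro j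
    simp only [cj, Finset.card_filter]
    exact Finset.sum_sdiff hTsub
  have hzero : ∀ j, n - m < j → cj A₀ j = 0 := by
    intro j hj
    rw [cj, Finset.card_eq_zero, Finset.filter_eq_empty_iff]
    intro x hx hd
    rw [hA0, Finset.mem_sdiff] at hx
    exact hx.2 (Finset.mem_filter.mpr ⟨hx.1, (pow_dvd_pow 2 (by omega)).trans hd⟩)
  have hcjval : ∀ j, 1 ≤ j → j ≤ n - m → cj A₀ j = 2 ^ (n - j) - 2 ^ m := by
    intro j hj1 hj2
    have h1 := hsumj j
    rw [cj_Tstar_le hmn hj2, cj_S2 (by omega : j ≤ n)] at h1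
    have h2 : (2 : ℕ) ^ m ≤ 2 ^ (n - j) := Nat.pow_le_pow_right (by norm_num) (by omega)
    omega
  have hEsum : E = ∑ j ∈ Finset.Icc 1 (n - m), cj A₀ j := by
    rw [hE, W2_eq hA0sub]
    symm
    apply Finset.sum_subset
    · apply Finset.Icc_subset_Icc_right
      omega
    · intro j hj hj'
      simp only [mem_Icc] at hj hj'
      exact hzero j (by omega)
  have hcast : (E : ℤ) = ∑ j ∈ Finset.Icc 1 (n - m), ((2 : ℤ) ^ (n - j) - 2 ^ m) := by
    rw [hEsum]
    push_cast
    apply Finset.sum_congr rfl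
    intro j hj
    simp only [mem_Icc] at hj
    rw [hcjval j hj.1 hj.2]
    have h2 : (2 : ℕ) ^ m ≤ 2 ^ (n - j) := Nat.pow_le_pow_right (by norm_num) (by omega)
    push_cast [Nat.cast_sub h2]
    ring
  rw [hcast, Finset.sum_sub_distrib, geom_sum_int (by omega : n - m ≤ n),
    Finset.sum_const, Nat.card_Icc]
  have hnm : n - (n - m) = m := by omega
  have hcnm : ((n - m + 1 - 1 : ℕ) : ℤ) = (n : ℤ) - m := by
    push_cast [Nat.cast_sub hmn]
    omega
  rw [hnm]
  rw [nsmul_eq_mul, hcnm]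
  ring
end
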